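/- Define the sequence of surreal forms p : ℕ → PGame representing powers of the canonical 2 by p(0) = (2 : PGame) (the canonical form of 2, i.e., the natural-number cast of 2 into PGame) and p(n+1) = (2 : PGame) · p(n). Then for every n, the birthday of p(n) is a natural number, and the birthdays satisfy the recurrence g(p(n+1)) = g(p(n)) · (g(p(n)) + 1), with g(p(0)) = 2. -/

import Mathlib

set_option linter.deprecated false

universe u

namespace SetTheory

/-- Pre-game, as in Mathlib (December 2024): `SetTheory.PGame`. -/
inductive PGame : Type (u + 1)
  | mk : ∀ α β : Type u, (α → PGame) → (β → PGame) → PGame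

namespace PGame

instance : Zero PGame := ⟨⟨PEmpty, PEmpty, PEmpty.elim, PEmpty.elim⟩⟩

instance : One PGame := ⟨⟨PUnit, PEmpty, fun _ => 0, PEmpty.elim⟩⟩

def neg : PGame → PGame
  | ⟨l, r, L, R⟩ => ⟨r, l, fun i => neg (R i), fun i => neg (L i)⟩

instance : Neg PGame := ⟨neg⟩

noncomputable instance : Add PGame.{u} :=
  ⟨fun x y => by
    induction x generalizing y with | mk xl xr _ _ IHxl IHxr => _
    induction y with | mk yl yr yL yR IHyl IHyr => _
    have y := mk yl yr yL yR
    refine ⟨xl ⊕ yl, xr ⊕ yr, Sum.rec ?_ ?_, Sum.rec ?_ ?_⟩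
    · exact fun i => IHxl i y
    · exact IHyl
    · exact fun i => IHxr i y
    · exact IHyr⟩

noncomputable instance : Sub PGame := ⟨fun x y => x + -y⟩

noncomputable instance : NatCast PGame := ⟨Nat.unaryCast⟩

noncomputable instance : Mul PGame.{u} :=
  ⟨fun x y => by
    induction x generalizing y with | mk xl xr _ _ IHxl IHxr => _
    induction y with | mk yl yr yL yR IHyl IHyr => _
    have y := mk yl yr yL yR
    refine ⟨(xl × yl) ⊕ (xr × yr), (xl × yr) ⊕ (xr × yl), ?_, ?_⟩ <;> rintro (⟨i, j⟩ | ⟨i, j⟩)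
    · exact IHxl i y + IHyl j - IHxl i (yL j)
    · exact IHxr i y + IHyr j - IHxr i (yR j)
    · exact IHxl i y + IHyr j - IHxl i (yR j)
    · exact IHxr i y + IHyl j - IHxr i (yL j)⟩

/-- The birthday of a pre-game, as in Mathlib (December 2024). -/
noncomputable def birthday : PGame.{u} → Ordinal.{u}
  | ⟨_, _, xL, xR⟩ =>
    max (Ordinal.lsub.{u, u} fun i => birthday (xL i)) (Ordinal.lsub.{u, u} fun i => birthday (xR i))

end PGame

end SetTheory

open SetTheory PGame Ordinal

/-- Powers of the canonical surreal form of 2: `p 0 = 2`, `p (n+1) = 2 * p n`. -/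
noncomputable def powTwo : ℕ → PGame
  | 0 => (2 : ℕ)
  | n + 1 => ((2 : ℕ) : PGame) * powTwo n

/-! The canonical `2` is `{0 + 0 + 1, 0 + 1 + 0 | }`, and both of its options have birthday `1`.
On finite birthdays, the birthday of a sum is the sum of the birthdays, and multiplying by a
game of birthday `1` leaves the birthday unchanged. So if `x` has birthday `k`, an option
`y' * x + 2 * x' - y' * x'` of `2 * x`, with `x'` an option of `x` of birthday `m < k`, has
birthday `k + m (m + 1) + m`. This is largest for `m = k - 1`, which gives
`g(2 * x) = k + (k - 1) k + (k - 1) + 1 = k (k + 1)`. -/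

theorem Ordinal.exists_eq_natCast_of_lt_natCast {o : Ordinal} {n : ℕ} (h : o < n) :
    ∃ m : ℕ, m < n ∧ o = m := by
  obtain ⟨m, rfl⟩ := lt_omega0.1 (h.trans (natCast_lt_omega0 n))
  exact ⟨m, Nat.cast_lt.1 h, rfl⟩

namespace SetTheory.PGame

def IsOption (y : PGame.{u}) : PGame.{u} → Prop
  | mk _ _ L R => (∃ i, y = L i) ∨ ∃ j, y = R j

theorem isOption_induction {C : PGame.{u} → Prop} (h : ∀ x, (∀ y, IsOption y x → C y) → C x)
    (x : PGame.{u}) : C x := by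
  induction x with
  | mk xl xr xL xR ihl ihr =>
    exact h _ fun y => by rintro (⟨i, rfl⟩ | ⟨j, rfl⟩); exacts [ihl i, ihr j]

theorem birthday_le_iff {x : PGame.{u}} {o : Ordinal.{u}} :
    x.birthday ≤ o ↔ ∀ y, IsOption y x → y.birthday < o := by
  cases x
  simp [birthday, IsOption, lsub_le_iff, or_imp, forall_and]

theorem lt_birthday_iff {x : PGame.{u}} {o : Ordinal.{u}} :
    o < x.birthday ↔ ∃ y, IsOption y x ∧ o ≤ y.birthday := by
  cases x
  simp [birthday, IsOption, lt_lsub_iff, or_and_right, exists_or]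

theorem IsOption.birthday_lt {x y : PGame.{u}} (h : IsOption y x) : y.birthday < x.birthday :=
  birthday_le_iff.1 le_rfl y h

theorem birthday_eq_zero_iff {x : PGame.{u}} : x.birthday = 0 ↔ ∀ y, ¬IsOption y x := by
  simp [← nonpos_iff_eq_zero, birthday_le_iff]

theorem birthday_eq_iff {x : PGame.{u}} {o : Ordinal.{u}} :
    x.birthday = o ↔ (∀ y, IsOption y x → y.birthday < o) ∧
      ∀ o' < o, ∃ y, IsOption y x ∧ o' ≤ y.birthday := by
  refine ⟨fun h => ⟨birthday_le_iff.1 h.le, fun o' ho' => lt_birthday_iff.1 (h ▸ ho')⟩, ?_⟩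
  rintro ⟨hle, hge⟩
  exact le_antisymm (birthday_le_iff.2 hle)
    (le_of_forall_lt fun o' ho' => lt_birthday_iff.2 (hge o' ho'))

theorem isOption_add_iff {x y z : PGame.{u}} :
    IsOption z (x + y) ↔
      (∃ x', IsOption x' x ∧ z = x' + y) ∨ ∃ y', IsOption y' y ∧ z = x + y' := by
  cases x; cases y
  constructor
  · rintro (⟨i | i, rfl⟩ | ⟨i | i, rfl⟩)
    exacts [.inl ⟨_, .inl ⟨i, rfl⟩, rfl⟩, .inr ⟨_, .inl ⟨i, rfl⟩, rfl⟩,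
      .inl ⟨_, .inr ⟨i, rfl⟩, rfl⟩, .inr ⟨_, .inr ⟨i, rfl⟩, rfl⟩]
  · rintro (⟨_, ⟨i, rfl⟩ | ⟨i, rfl⟩, rfl⟩ | ⟨_, ⟨i, rfl⟩ | ⟨i, rfl⟩, rfl⟩)
    exacts [.inl ⟨.inl i, rfl⟩, .inr ⟨.inl i, rfl⟩, .inl ⟨.inr i, rfl⟩, .inr ⟨.inr i, rfl⟩]

theorem isOption_mul_iff {x y z : PGame.{u}} :
    IsOption z (x * y) ↔
      ∃ x' y', IsOption x' x ∧ IsOption y' y ∧ z = x' * y + x * y' - x' * y' := by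
  cases x; cases y
  constructor
  · rintro (⟨⟨i, j⟩ | ⟨i, j⟩, rfl⟩ | ⟨⟨i, j⟩ | ⟨i, j⟩, rfl⟩)
    exacts [⟨_, _, .inl ⟨i, rfl⟩, .inl ⟨j, rfl⟩, rfl⟩, ⟨_, _, .inr ⟨i, rfl⟩, .inr ⟨j, rfl⟩, rfl⟩,
      ⟨_, _, .inl ⟨i, rfl⟩, .inr ⟨j, rfl⟩, rfl⟩, ⟨_, _, .inr ⟨i, rfl⟩, .inl ⟨j, rfl⟩, rfl⟩]
  · rintro ⟨_, _, ⟨i, rfl⟩ | ⟨i, rfl⟩, ⟨j, rfl⟩ | ⟨j, rfl⟩, rfl⟩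
    exacts [.inl ⟨.inl (i, j), rfl⟩, .inr ⟨.inl (i, j), rfl⟩, .inr ⟨.inr (i, j), rfl⟩,
      .inl ⟨.inr (i, j), rfl⟩]

theorem birthday_neg (x : PGame.{u}) : (-x).birthday = x.birthday := by
  induction x with
  | mk xl xr xL xR ihl ihr =>
    change max (lsub.{u, u} fun i => (-xR i).birthday) (lsub.{u, u} fun i => (-xL i).birthday) = _
    simp only [ihl, ihr, birthday, max_comm]

theorem birthday_zero : (0 : PGame.{u}).birthday = 0 :=
  birthday_eq_zero_iff.2 fun _ h => by rcases h with ⟨⟨⟩, _⟩ | ⟨⟨⟩, _⟩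

theorem isOption_one_iff {y : PGame.{u}} : IsOption y 1 ↔ y = 0 :=
  ⟨by rintro (⟨_, rfl⟩ | ⟨⟨⟩, _⟩); rfl, by rintro rfl; exact .inl ⟨PUnit.unit, rfl⟩⟩

theorem birthday_one : (1 : PGame.{u}).birthday = 1 := by
  refine birthday_eq_iff.2 ⟨fun y hy => ?_, fun o ho => ⟨0, isOption_one_iff.2 rfl, ?_⟩⟩
  · rw [isOption_one_iff.1 hy, birthday_zero]
    exact zero_lt_one
  · rw [lt_one_iff_zero.1 ho, birthday_zero]

theorem IsOption.exists_birthday_eq_natCast {x y : PGame.{u}} {n : ℕ} (h : IsOption y x)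
    (hx : x.birthday = n) : ∃ m < n, y.birthday = m :=
  Ordinal.exists_eq_natCast_of_lt_natCast (hx ▸ h.birthday_lt)

theorem exists_isOption_birthday_eq {x : PGame.{u}} {n : ℕ} (hx : x.birthday = (n + 1 : ℕ)) :
    ∃ y, IsOption y x ∧ y.birthday = n := by
  obtain ⟨y, hy, hny⟩ := lt_birthday_iff.1 (hx ▸ Nat.cast_lt.2 n.lt_succ_self)
  obtain ⟨m, hm, hym⟩ := hy.exists_birthday_eq_natCast hx
  rw [hym, Nat.cast_le] at hny
  exact ⟨y, hy, by rw [hym, show m = n by omega]⟩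

theorem birthday_eq_natCast_of {x : PGame.{u}} {n : ℕ}
    (hlt : ∀ y, IsOption y x → y.birthday < n)
    (hge : ∀ m < n, ∃ y, IsOption y x ∧ (m : Ordinal) ≤ y.birthday) : x.birthday = n := by
  refine birthday_eq_iff.2 ⟨hlt, fun o ho => ?_⟩
  obtain ⟨m, hm, rfl⟩ := Ordinal.exists_eq_natCast_of_lt_natCast ho
  exact hge m hm

theorem birthday_add_of_natCast {x y : PGame.{u}} {m n : ℕ} (hx : x.birthday = m)
    (hy : y.birthday = n) : (x + y).birthday = (m + n : ℕ) := by
  induction x using isOption_induction generalizing m y n with | _ x ihx =>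
  induction y using isOption_induction generalizing n with | _ y ihy =>
  refine birthday_eq_natCast_of (fun z hz => ?_) fun l hl => ?_
  · rcases isOption_add_iff.1 hz with ⟨x', hx', rfl⟩ | ⟨y', hy', rfl⟩
    · obtain ⟨m', hm', hb⟩ := hx'.exists_birthday_eq_natCast hx
      rw [ihx x' hx' hb hy, Nat.cast_lt]; omega
    · obtain ⟨n', hn', hb⟩ := hy'.exists_birthday_eq_natCast hy
      rw [ihy y' hy' hb, Nat.cast_lt]; omega
  · rcases m with _ | m
    · obtain ⟨n, rfl⟩ : ∃ n', n = n' + 1 := ⟨n - 1, by omega⟩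
      obtain ⟨y', hy', hb⟩ := exists_isOption_birthday_eq hy
      refine ⟨_, isOption_add_iff.2 (.inr ⟨y', hy', rfl⟩), ?_⟩
      rw [ihy y' hy' hb, Nat.cast_le]; omega
    · obtain ⟨x', hx', hb⟩ := exists_isOption_birthday_eq hx
      refine ⟨_, isOption_add_iff.2 (.inl ⟨x', hx', rfl⟩), ?_⟩
      rw [ihx x' hx' hb hy, Nat.cast_le]; omega

theorem birthday_sub_of_natCast {x y : PGame.{u}} {m n : ℕ} (hx : x.birthday = m)
    (hy : y.birthday = n) : (x - y).birthday = (m + n : ℕ) :=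
  birthday_add_of_natCast hx ((birthday_neg y).trans hy)

theorem natCast_succ (n : ℕ) : ((n + 1 : ℕ) : PGame.{u}) = n + 1 := rfl

theorem birthday_natCast (n : ℕ) : (n : PGame.{u}).birthday = n := by
  induction n with
  | zero => exact birthday_zero
  | succ n ih => exact birthday_add_of_natCast ih (birthday_one.trans Nat.cast_one.symm)

theorem birthday_of_isOption_natCast_succ {c : PGame.{u}} {n : ℕ}
    (hc : IsOption c (n + 1 : ℕ)) : c.birthday = n := by
  induction n generalizing c with
  | zero =>
    rw [natCast_succ, isOption_add_iff] at hc
    rcases hc with ⟨c', hc', -⟩ | ⟨c', hc', rfl⟩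
    · exact absurd hc' (birthday_eq_zero_iff.1 birthday_zero c')
    · rw [isOption_one_iff.1 hc']
      simpa using birthday_add_of_natCast (birthday_natCast 0)
        (birthday_zero.trans Nat.cast_zero.symm)
  | succ n ih =>
    rw [natCast_succ, isOption_add_iff] at hc
    rcases hc with ⟨c', hc', rfl⟩ | ⟨c', hc', rfl⟩
    · exact birthday_add_of_natCast (ih hc') (birthday_one.trans Nat.cast_one.symm)
    · rw [isOption_one_iff.1 hc']
      simpa using birthday_add_of_natCast (birthday_natCast (n + 1))
        (birthday_zero.trans Nat.cast_zero.symm)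

theorem birthday_mul_eq_zero {a : PGame.{u}} (ha : a.birthday = 0) (z : PGame.{u}) :
    (a * z).birthday = 0 := by
  refine birthday_eq_zero_iff.2 fun w hw => ?_
  obtain ⟨a', -, ha', -⟩ := isOption_mul_iff.1 hw
  exact birthday_eq_zero_iff.1 ha a' ha'

theorem birthday_mul_of_birthday_eq_one {c x : PGame.{u}} {k : ℕ} (hc : c.birthday = 1)
    (hx : x.birthday = k) : (c * x).birthday = k := by
  have hc₀ : ∀ c', IsOption c' c → c'.birthday = 0 := fun c' h =>
    lt_one_iff_zero.1 (hc ▸ h.birthday_lt)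
  obtain ⟨c₀, hc₀'⟩ : ∃ c', IsOption c' c := by
    by_contra! h
    exact one_ne_zero (hc.symm.trans (birthday_eq_zero_iff.2 h))
  induction x using isOption_induction generalizing k with | _ x ih =>
  have hopt : ∀ c' x' (m : ℕ), IsOption c' c → IsOption x' x → x'.birthday = m →
      (c' * x + c * x' - c' * x').birthday = m := fun c' x' m hc' hx' hm => by
    simpa using birthday_sub_of_natCast (birthday_add_of_natCast
      ((birthday_mul_eq_zero (hc₀ c' hc') x).trans Nat.cast_zero.symm) (ih x' hx' hm))
      ((birthday_mul_eq_zero (hc₀ c' hc') x').trans Nat.cast_zero.symm)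
  refine birthday_eq_natCast_of (fun z hz => ?_) fun m hm => ?_
  · obtain ⟨c', x', hc', hx', rfl⟩ := isOption_mul_iff.1 hz
    obtain ⟨m, hm, hb⟩ := hx'.exists_birthday_eq_natCast hx
    rw [hopt c' x' m hc' hx' hb, Nat.cast_lt]
    exact hm
  · obtain ⟨x', hx', hmx'⟩ := lt_birthday_iff.1 (hx ▸ Nat.cast_lt.2 hm)
    obtain ⟨m', -, hb⟩ := hx'.exists_birthday_eq_natCast hx
    refine ⟨_, isOption_mul_iff.2 ⟨c₀, x', hc₀', hx', rfl⟩, ?_⟩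
    rwa [hopt c₀ x' m' hc₀' hx' hb, ← hb]

theorem birthday_mul_of_forall_birthday_isOption_eq_one {y x : PGame.{u}} {k : ℕ}
    (hy : ∃ y', IsOption y' y) (hy₁ : ∀ y', IsOption y' y → y'.birthday = 1)
    (hx : x.birthday = k) : (y * x).birthday = (k * (k + 1) : ℕ) := by
  obtain ⟨y₀, hy₀⟩ := hy
  induction x using isOption_induction generalizing k with | _ x ih =>
  have hopt : ∀ y' x' (m : ℕ), IsOption y' y → IsOption x' x → x'.birthday = m →
      (y' * x + y * x' - y' * x').birthday = (k + m * (m + 1) + m : ℕ) :=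
    fun y' x' m hy' hx' hm => birthday_sub_of_natCast
      (birthday_add_of_natCast (birthday_mul_of_birthday_eq_one (hy₁ y' hy') hx) (ih x' hx' hm))
      (birthday_mul_of_birthday_eq_one (hy₁ y' hy') hm)
  refine birthday_eq_natCast_of (fun z hz => ?_) fun l hl => ?_
  · obtain ⟨y', x', hy', hx', rfl⟩ := isOption_mul_iff.1 hz
    obtain ⟨m, hm, hb⟩ := hx'.exists_birthday_eq_natCast hx
    rw [hopt y' x' m hy' hx' hb, Nat.cast_lt]
    nlinarith
  · obtain ⟨s, rfl⟩ : ∃ s, k = s + 1 := ⟨k - 1, by rcases k with _ | k <;> simp_all⟩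
    obtain ⟨x', hx', hb⟩ := exists_isOption_birthday_eq hx
    refine ⟨_, isOption_mul_iff.2 ⟨y₀, x', hy₀, hx', rfl⟩, ?_⟩
    rw [hopt y₀ x' s hy₀ hx' hb, Nat.cast_le]
    nlinarith

theorem birthday_two_mul {x : PGame.{u}} {k : ℕ} (hx : x.birthday = k) :
    (((2 : ℕ) : PGame.{u}) * x).birthday = (k * (k + 1) : ℕ) := by
  refine birthday_mul_of_forall_birthday_isOption_eq_one ?_
    (fun _ h => (birthday_of_isOption_natCast_succ (n := 1) h).trans Nat.cast_one) hx
  by_contra! h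
  exact two_ne_zero ((birthday_natCast 2).symm.trans (birthday_eq_zero_iff.2 h))

end SetTheory.PGame

theorem exists_birthday_powTwo_eq_natCast (n : ℕ) : ∃ k : ℕ, (powTwo.{u} n).birthday = k := by
  induction n with
  | zero => exact ⟨2, birthday_natCast 2⟩
  | succ n ih =>
    obtain ⟨k, hk⟩ := ih
    exact ⟨_, birthday_two_mul hk⟩

theorem birthday_powTwo :
    (∀ n : ℕ, ∃ k : ℕ, (powTwo n).birthday = (k : Ordinal)) ∧
    (powTwo 0).birthday = 2 ∧
    ∀ n : ℕ, (powTwo (n + 1)).birthday =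
      (powTwo n).birthday * ((powTwo n).birthday + 1) := by
  refine ⟨exists_birthday_powTwo_eq_natCast, birthday_natCast 2, fun n => ?_⟩
  obtain ⟨k, hk⟩ := exists_birthday_powTwo_eq_natCast n
  rw [powTwo, birthday_two_mul hk, hk]
  push_cast
  rfl
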